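/- arXiv:1605.06485 — 2 statements merged into one kernel-verified Lean document; each statement's English description precedes it below -/
import Mathlib

section
/- Let V = {v^1,...,v^k} ⊂ ℕ^q with λ in the interior of cone(V). Let ℒ = {∑ nⁱ vⁱ : nⁱ ∈ ℤ}, ℒ₊ = {∑ nⁱ vⁱ : nⁱ ∈ ℕ}, and for α > 0 let cone_α(V) = {∑ aⁱ vⁱ : aⁱ ≥ α}. Then there exists α > 0 such that ℒ ∩ cone_α(V) ⊆ ℒ₊. -/
/-!
Let `w = a - n` be the difference of the real and the integer coefficient vectors of `x`; it is
a real linear relation among the `vⁱ`. Since the `vⁱ` are integral, the real relations are spanned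
by finitely many integer relations `z₁, …, zₘ` (expand the coordinates of a real relation in a
Hamel basis of `ℝ` over `ℚ`, then clear denominators). Rounding the coefficients of `w` in this
family down gives an integer relation `r` with `w - r ≤ C := ∑ ‖zₗ‖` coordinatewise, so for
`α ≥ C` the integer coefficients `n + r = a - (w - r)` of `x` are nonnegative.
-/

open Finset

/-- The set of real linear combinations of `v 1, ..., v k` with all coefficients at least `α`. -/
def coneAlpha {q k : ℕ} (v : Fin k → Fin q → ℕ) (α : ℝ) : Set (Fin q → ℝ) :=
  {x | ∃ a : Fin k → ℝ, (∀ i, α ≤ a i) ∧ x = ∑ i, a i • (fun j => (v i j : ℝ))}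

/-- The lattice `ℒ(V)` of integer linear combinations of the `vⁱ`. -/
def latticeOf {q k : ℕ} (v : Fin k → Fin q → ℕ) : Set (Fin q → ℤ) :=
  {x | ∃ n : Fin k → ℤ, ∀ j, x j = ∑ i, n i * (v i j : ℤ)}

/-- The nonnegative lattice `ℒ₊(V)` of `ℕ`-linear combinations of the `vⁱ`. -/
def latticePlus {q k : ℕ} (v : Fin k → Fin q → ℕ) : Set (Fin q → ℤ) :=
  {x | ∃ n : Fin k → ℕ, ∀ j, x j = ∑ i, (n i : ℤ) * (v i j : ℤ)}

open Matrix Submodule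

theorem Matrix.mem_span_algebraMap_of_vecMul_eq_zero {K L ι κ μ : Type*} [Field K] [Field L]
    [Algebra K L] [Fintype ι] {A : Matrix ι κ K} {u : μ → ι → K}
    (hu : ∀ c : ι → K, c ᵥ* A = 0 → c ∈ span K (Set.range u))
    {w : ι → L} (hw : w ᵥ* A.map (algebraMap K L) = 0) :
    w ∈ span L (Set.range fun l i => algebraMap K L (u l i)) := by
  classical
  -- the coordinates of `w` in a `K`-basis of `L` are `K`-linear relations
  let B := Module.Basis.ofVectorSpace K L
  let c : Module.Basis.ofVectorSpaceIndex K L → ι → K := fun b i => B.repr (w i) b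
  have hc : ∀ b, c b ᵥ* A = 0 := fun b => funext fun j => by
    have := congrArg (fun x => B.repr x b) (congrFun hw j)
    simp only [vecMul, dotProduct, map_apply, ← Algebra.commutes, ← Algebra.smul_def, map_sum,
      map_smul, Finsupp.coe_finsetSum, Finset.sum_apply, Finsupp.smul_apply, smul_eq_mul] at this
    simpa [vecMul, dotProduct, c, mul_comm] using this
  let s := univ.biUnion fun i => (B.repr (w i)).support
  have hw_eq : w = ∑ b ∈ s, B b • fun i => algebraMap K L (c b i) := funext fun i => by
    conv_lhs => rw [← B.linearCombination_repr (w i)]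
    rw [Finsupp.linearCombination_apply, Finsupp.sum_of_support_subset _
      (subset_biUnion_of_mem (fun i => (B.repr (w i)).support) (mem_univ i)) _
      (fun _ _ => zero_smul K (B _))]
    simp [Finset.sum_apply, Algebra.smul_def, c, s, mul_comm]
  rw [hw_eq]
  refine sum_mem fun b _ => smul_mem _ _ ?_
  have := mem_map_of_mem (f := (Algebra.linearMap K L).compLeft ι) (hu _ (hc b))
  rw [map_span, ← Set.range_comp] at this
  exact span_le_restrictScalars K L _ this

theorem Matrix.exists_int_family_span_real_vecMul_eq_zero {ι κ : Type*} [Fintype ι]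
    (A : Matrix ι κ ℤ) :
    ∃ (m : ℕ) (z : Fin m → ι → ℤ), (∀ l, z l ᵥ* A = 0) ∧
      ∀ w : ι → ℝ, w ᵥ* A.map (↑) = 0 → w ∈ span ℝ (Set.range fun l i => (z l i : ℝ)) := by
  set Aℚ : Matrix ι κ ℚ := A.map (↑)
  obtain ⟨m, u, hu⟩ := fg_iff_exists_fin_generating_family.1
    (IsNoetherian.noetherian (LinearMap.ker Aℚ.vecMulLinear))
  obtain ⟨d, hd⟩ := IsLocalization.exist_integer_multiples_of_finite (nonZeroDivisors ℤ)
    (fun p : Fin m × ι => u p.1 p.2)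
  choose y hy using hd
  have hd0 : (d : ℚ) ≠ 0 := by exact_mod_cast nonZeroDivisors.coe_ne_zero d
  let z : Fin m → ι → ℤ := fun l i => y (l, i)
  have hz : ∀ l, (fun i => (z l i : ℚ)) = (d : ℚ) • u l := fun l => funext fun i => by
    simpa [z, zsmul_eq_mul] using hy (l, i)
  refine ⟨m, z, fun l => ?_, fun w hw => ?_⟩
  · have hu_l : u l ᵥ* Aℚ = 0 := LinearMap.mem_ker.1 (hu ▸ subset_span (Set.mem_range_self l))
    have hcast : (fun i => (z l i : ℚ)) ᵥ* Aℚ = 0 := by rw [hz, smul_vecMul, hu_l, smul_zero]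
    funext j
    simpa using (RingHom.map_vecMul (Int.castRingHom ℚ) A (z l) j).trans (congrFun hcast j)
  · have hspan : ∀ c : ι → ℚ, c ᵥ* Aℚ = 0 → c ∈ span ℚ (Set.range fun l i => (z l i : ℚ)) := by
      intro c hc
      have hc' : c ∈ span ℚ (Set.range u) := hu.symm ▸ hc
      refine span_le.2 ?_ hc'
      rintro _ ⟨l, rfl⟩
      have : u l = (d : ℚ)⁻¹ • fun i => (z l i : ℚ) := by rw [hz, inv_smul_smul₀ hd0]
      rw [this]
      exact smul_mem _ _ (subset_span ⟨l, rfl⟩)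
    have hw' : w ᵥ* Aℚ.map (algebraMap ℚ ℝ) = 0 := by
      simpa [Aℚ, Matrix.map_map, Function.comp_def] using hw
    simpa using mem_span_algebraMap_of_vecMul_eq_zero hspan hw'

theorem Matrix.exists_int_vecMul_eq_zero_sub_le {ι κ : Type*} [Fintype ι] (A : Matrix ι κ ℤ) :
    ∃ C : ℝ, ∀ w : ι → ℝ, w ᵥ* A.map (↑) = 0 →
      ∃ r : ι → ℤ, r ᵥ* A = 0 ∧ ∀ i, w i - r i ≤ C := by
  obtain ⟨m, z, hz, hspan⟩ := A.exists_int_family_span_real_vecMul_eq_zero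
  refine ⟨∑ l, ‖z l‖, fun w hw => ?_⟩
  obtain ⟨s, rfl⟩ := (mem_span_range_iff_exists_fun ℝ).1 (hspan w hw)
  refine ⟨∑ l, ⌊s l⌋ • z l, by
    simp only [sum_vecMul, smul_vecMul, hz, smul_zero, sum_const_zero], fun i => ?_⟩
  calc (∑ l, s l • fun i => (z l i : ℝ)) i - ((∑ l, ⌊s l⌋ • z l) i : ℤ)
      = ∑ l, Int.fract (s l) * z l i := by
        simp [Finset.sum_apply, ← Int.self_sub_floor, sub_mul]
    _ ≤ ∑ l, ‖z l‖ := sum_le_sum fun l _ => calc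
        Int.fract (s l) * z l i ≤ Int.fract (s l) * |(z l i : ℝ)| := by
          gcongr
          exact le_abs_self _
      _ ≤ |(z l i : ℝ)| := mul_le_of_le_one_left (abs_nonneg _) (Int.fract_lt_one _).le
      _ ≤ ‖z l‖ := by simpa [Int.norm_eq_abs] using norm_le_pi_norm (z l) i

theorem Matrix.exists_nat_vecMul_eq_of_forall_ge {ι κ : Type*} [Fintype ι] (A : Matrix ι κ ℤ) :
    ∃ α > (0 : ℝ), ∀ (n : ι → ℤ) (a : ι → ℝ), (∀ i, α ≤ a i) →
      a ᵥ* A.map (↑) = (fun j => ((n ᵥ* A) j : ℝ)) →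
        ∃ m : ι → ℕ, (fun i => (m i : ℤ)) ᵥ* A = n ᵥ* A := by
  obtain ⟨C, hC⟩ := A.exists_int_vecMul_eq_zero_sub_le
  refine ⟨max C 1, by positivity, fun n a ha hna => ?_⟩
  have hrel : (a - fun i => (n i : ℝ)) ᵥ* A.map (↑) = 0 := by
    rw [sub_vecMul, hna, sub_eq_zero]
    exact funext fun j => RingHom.map_vecMul (Int.castRingHom ℝ) A n j
  obtain ⟨r, hr, hwr⟩ := hC _ hrel
  have hnonneg : ∀ i, 0 ≤ n i + r i := fun i => by
    have hwr_i : a i - n i - r i ≤ C := hwr i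
    have : (0 : ℝ) ≤ n i + r i := by linarith [ha i, le_max_left C 1]
    exact_mod_cast this
  refine ⟨fun i => (n i + r i).toNat, ?_⟩
  simp only [Int.toNat_of_nonneg (hnonneg _)]
  change (n + r) ᵥ* A = _
  rw [add_vecMul, hr, add_zero]

theorem stmt3_general {q k : ℕ} (v : Fin k → Fin q → ℕ) :
    ∃ α > (0 : ℝ), ∀ x : Fin q → ℤ,
      x ∈ latticeOf v → (fun j => (x j : ℝ)) ∈ coneAlpha v α →
        x ∈ latticePlus v := by
  let V : Matrix (Fin k) (Fin q) ℤ := .of fun i j => v i j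
  obtain ⟨α, hα, H⟩ := V.exists_nat_vecMul_eq_of_forall_ge
  refine ⟨α, hα, ?_⟩
  rintro x ⟨n, hn⟩ ⟨a, ha, hx⟩
  have hxn : x = n ᵥ* V := funext hn
  obtain ⟨m, hm⟩ := H n a ha (by rw [← hxn, hx, vecMul_eq_sum]; ext j; simp [V])
  exact ⟨m, fun j => by rw [hxn, ← hm]; rfl⟩

/-- If `λ` is interior to `cone(V)`, there is `α > 0` with
`ℒ ∩ cone_α(V) ⊆ ℒ₊`. -/
theorem stmt3 {q k : ℕ} (v : Fin k → Fin q → ℕ) (lam : Fin q → ℝ)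
    (hl : lam ∈ interior (coneAlpha v 0)) :
    ∃ α > (0 : ℝ), ∀ x : Fin q → ℤ,
      x ∈ latticeOf v → (fun j => (x j : ℝ)) ∈ coneAlpha v α →
        x ∈ latticePlus v :=
  stmt3_general v
end

section
/- Let ∼ be a symmetric relation on {1,...,q} and λ ∈ (0,∞)^q. If every nonempty S ⊆ {1,...,q} is excessive (λ(N(S)) > λ(S)) or satisfies N(S) = S, then λ lies in the interior of cone(V), where V = {eᵢ + eⱼ : i ∼ j}. If there is no deficient set but some critical set (λ(N(S)) = λ(S) and S ≠ N(S)), then λ ∈ ∂cone(V). -/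
/-!
Having no deficient set is an LP-duality condition. The cone `cone(V)` is finitely generated,
hence closed (conic Carathéodory), so if `λ ∉ cone(V)` Farkas' lemma gives `y` with
`yᵢ + yⱼ ≥ 0` for `i ∼ j` and `∑ λᵢ yᵢ < 0`. But `N({y ≤ -t}) ⊆ {y ≥ t}` for `t > 0`, so
`λ{y ≤ -t} ≤ λ{y ≥ t}`, and integrating over `t` (layer cake) gives `∑ λᵢ yᵢ ≥ 0`.

If every set is excessive or self-neighbouring, these strict inequalities persist near `λ`, so a
whole neighbourhood of `λ` lies in `cone(V)`. If `S` is critical and `x ∈ S \ N(S)`, the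
functional `μ ↦ μ(N(S)) - μ(S)` is nonnegative on `V`, vanishes at `λ` and is negative at
`λ + ε eₓ`, so `λ` is not interior.
-/

open Finset

/-- The set of allowed family types for pair matchings: `eᵢ + eⱼ` for `i ∼ j`. -/
def pairTypes {q : ℕ} (rel : Fin q → Fin q → Prop) : Set (Fin q → ℝ) :=
  {w | ∃ i j, rel i j ∧ w = Pi.single i (1 : ℝ) + Pi.single j (1 : ℝ)}

/-- The conical hull of a set `S ⊆ ℝ^q`. -/
def coneOfSet {q : ℕ} (S : Set (Fin q → ℝ)) : Set (Fin q → ℝ) :=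
  {x | ∃ (n : ℕ) (c : Fin n → ℝ) (w : Fin n → Fin q → ℝ),
    (∀ i, 0 ≤ c i) ∧ (∀ i, w i ∈ S) ∧ x = ∑ i, c i • w i}

/-- The neighbourhood `N(S)` of a set of colours in the compatibility graph. -/
def nbhd {q : ℕ} (rel : Fin q → Fin q → Prop) [DecidableRel rel] (S : Finset (Fin q)) :
    Finset (Fin q) :=
  Finset.univ.filter (fun x => ∃ y ∈ S, rel x y)

namespace PointedCone

variable {E : Type*} [AddCommGroup E] [Module ℝ E] {ι : Type*} [Fintype ι] {w : ι → E}

theorem coe_hull_range_eq_image (w : ι → E) :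
    (hull ℝ (Set.range w) : Set E) = Fintype.linearCombination ℝ w '' Set.Ici 0 := by
  ext x
  simp only [SetLike.mem_coe, Submodule.mem_span_range_iff_exists_fun, Set.mem_image,
    Set.mem_Ici, Fintype.linearCombination_apply]
  constructor
  · rintro ⟨c, rfl⟩
    exact ⟨fun i => c i, fun i => (c i).2, rfl⟩
  · rintro ⟨c, hc, rfl⟩
    exact ⟨fun i => ⟨c i, hc i⟩, rfl⟩

/-- Conic Carathéodory step: along a linear dependence with a positive coefficient, a conic
combination can be moved until one of its coefficients vanishes. -/
theorem exists_nonneg_eq_zero_linearCombination_eq (hw : ¬LinearIndependent ℝ w) {c : ι → ℝ}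
    (hc : 0 ≤ c) : ∃ c' : ι → ℝ, 0 ≤ c' ∧ (∃ p, c' p = 0) ∧
      Fintype.linearCombination ℝ w c' = Fintype.linearCombination ℝ w c := by
  classical
  obtain ⟨d, hd, i₀, hi₀⟩ : ∃ d, Fintype.linearCombination ℝ w d = 0 ∧ ∃ i, 0 < d i := by
    obtain ⟨g, hg, i, hi⟩ := Fintype.not_linearIndependent_iff.1 hw
    rw [← Fintype.linearCombination_apply ℝ] at hg
    rcases hi.lt_or_gt with h | h
    · exact ⟨-g, by rw [map_neg, hg, neg_zero], i, neg_pos.2 h⟩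
    · exact ⟨g, hg, i, h⟩
  obtain ⟨p, hp, hmin⟩ := ({i | 0 < d i} : Finset ι).exists_min_image (fun i => c i / d i)
    ⟨i₀, by simpa using hi₀⟩
  rw [mem_filter_univ] at hp
  set t := c p / d p
  refine ⟨c - t • d, fun i => ?_, ⟨p, by simp [t, hp.ne']⟩, by simp [hd]⟩
  have ht : 0 ≤ t := div_nonneg (hc p) hp.le
  have : t * d i ≤ c i := by
    rcases le_or_gt (d i) 0 with h | h
    · exact (mul_nonpos_of_nonneg_of_nonpos ht h).trans (hc i)
    · exact (le_div_iff₀ h).1 (hmin i ((mem_filter_univ _).2 h))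
  simpa using this

theorem hull_range_eq_iUnion_of_not_linearIndependent (hw : ¬LinearIndependent ℝ w) :
    (hull ℝ (Set.range w) : Set E) =
      ⋃ p, (hull ℝ (Set.range fun i : {i // i ≠ p} => w i.1) : Set E) := by
  classical
  refine subset_antisymm ?_ (Set.iUnion_subset fun p => Submodule.span_mono ?_)
  · rw [coe_hull_range_eq_image]
    rintro _ ⟨c, hc, rfl⟩
    obtain ⟨c', hc', ⟨p, hp⟩, hc'c⟩ := exists_nonneg_eq_zero_linearCombination_eq hw hc
    refine Set.mem_iUnion.2 ⟨p, ?_⟩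
    rw [coe_hull_range_eq_image]
    refine ⟨fun i => c' i, fun i => hc' i, ?_⟩
    rw [← hc'c, Fintype.linearCombination_apply, Fintype.linearCombination_apply,
      Fintype.sum_eq_add_sum_subtype_ne _ p, hp, zero_smul, zero_add]
  · rintro _ ⟨i, rfl⟩
    exact ⟨i, rfl⟩

variable [TopologicalSpace E] [IsTopologicalAddGroup E] [ContinuousSMul ℝ E] [T2Space E]

theorem isClosed_hull_range_of_linearIndependent (hw : LinearIndependent ℝ w) :
    IsClosed (hull ℝ (Set.range w) : Set E) := by
  have hker : LinearMap.ker (Fintype.linearCombination ℝ w) = ⊥ :=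
    LinearMap.ker_eq_bot'.2 fun c hc => funext <| Fintype.linearIndependent_iff.1 hw c <| by
      rwa [← Fintype.linearCombination_apply]
  rw [coe_hull_range_eq_image]
  exact (LinearMap.isClosedEmbedding_of_injective hker).isClosedMap _ isClosed_Ici

theorem isClosed_hull_range {ι : Type*} [Finite ι] (w : ι → E) :
    IsClosed (hull ℝ (Set.range w) : Set E) := by
  induction hn : Nat.card ι using Nat.strong_induction_on generalizing ι with
  | _ n ih =>
  have := Fintype.ofFinite ι
  by_cases hw : LinearIndependent ℝ w
  · exact isClosed_hull_range_of_linearIndependent hw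
  rw [hull_range_eq_iUnion_of_not_linearIndependent hw]
  exact isClosed_iUnion_of_finite fun p =>
    ih _ (hn ▸ Finite.card_subtype_lt (not_not.2 rfl)) _ rfl

theorem isClosed_hull_of_finite {s : Set E} (hs : s.Finite) : IsClosed (hull ℝ s : Set E) := by
  have := hs.to_subtype
  simpa using isClosed_hull_range (Subtype.val : s → E)

end PointedCone

theorem apply_eq_sum_mul_apply_single {ι F : Type*} [Fintype ι] [DecidableEq ι]
    [FunLike F (ι → ℝ) ℝ] [LinearMapClass F ℝ (ι → ℝ) ℝ] (f : F) (x : ι → ℝ) :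
    f x = ∑ i, x i * f (Pi.single i 1) := by
  conv_lhs => rw [← Finset.univ_sum_single x]
  rw [map_sum]
  exact sum_congr rfl fun i _ => by
    rw [← smul_eq_mul, ← map_smul, ← Pi.single_smul, smul_eq_mul, mul_one]

open MeasureTheory

theorem integral_Ioi_indicator_Iic (a c : ℝ) :
    ∫ t in Set.Ioi 0, (Set.Iic a).indicator (fun _ => c) t = c * a⁺ := by
  rw [setIntegral_indicator measurableSet_Iic, Set.Ioi_inter_Iic, setIntegral_const,
    Real.volume_real_Ioc, sub_zero, smul_eq_mul, mul_comm, posPart_def]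

theorem integrableOn_indicator_Iic (a c : ℝ) :
    IntegrableOn ((Set.Iic a).indicator fun _ => c) (Set.Ioi 0) := by
  refine (integrable_indicator_iff measurableSet_Iic).2 ?_
  refine integrableOn_const ?_
  rw [Measure.restrict_apply measurableSet_Iic, Set.inter_comm, Set.Ioi_inter_Iic]
  exact measure_Ioc_lt_top.ne

theorem sum_filter_le_eq_sum_indicator {ι : Type*} [Fintype ι] (μ y : ι → ℝ) (t : ℝ) :
    ∑ i with t ≤ y i, μ i = ∑ i, (Set.Iic (y i)).indicator (fun _ => μ i) t := by
  simp only [sum_filter, Set.indicator_apply, Set.mem_Iic]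

theorem sum_mul_posPart_eq_integral {ι : Type*} [Fintype ι] (μ y : ι → ℝ) :
    ∑ i, μ i * (y i)⁺ = ∫ t in Set.Ioi 0, ∑ i with t ≤ y i, μ i := by
  simp_rw [sum_filter_le_eq_sum_indicator]
  rw [integral_finsetSum _ fun i _ => integrableOn_indicator_Iic _ _]
  simp_rw [integral_Ioi_indicator_Iic]

theorem integrableOn_sum_filter_le {ι : Type*} [Fintype ι] (μ y : ι → ℝ) :
    IntegrableOn (fun t => ∑ i with t ≤ y i, μ i) (Set.Ioi 0) := by
  simp_rw [sum_filter_le_eq_sum_indicator]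
  exact integrable_finsetSum _ fun i _ => integrableOn_indicator_Iic _ _

theorem coneOfSet_eq_hull {q : ℕ} (S : Set (Fin q → ℝ)) :
    coneOfSet S = PointedCone.hull ℝ S := by
  ext x
  rw [SetLike.mem_coe, Submodule.mem_span_set']
  constructor
  · rintro ⟨n, c, w, hc, hw, rfl⟩
    exact ⟨n, fun i => ⟨c i, hc i⟩, fun i => ⟨w i, hw i⟩, rfl⟩
  · rintro ⟨n, c, w, rfl⟩
    exact ⟨n, fun i => c i, fun i => w i, fun i => (c i).2, fun i => (w i).2, rfl⟩

theorem nonneg_of_mem_coneOfSet {q : ℕ} {S : Set (Fin q → ℝ)} (φ : (Fin q → ℝ) →ₗ[ℝ] ℝ)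
    (hφ : ∀ w ∈ S, 0 ≤ φ w) {x : Fin q → ℝ} (hx : x ∈ coneOfSet S) : 0 ≤ φ x := by
  obtain ⟨n, c, w, hc, hw, rfl⟩ := hx
  simpa only [map_sum, map_smul, smul_eq_mul] using
    sum_nonneg fun i _ => mul_nonneg (hc i) (hφ _ (hw i))

theorem isClosed_hull_pairTypes {q : ℕ} (rel : Fin q → Fin q → Prop) :
    IsClosed (PointedCone.hull ℝ (pairTypes rel) : Set (Fin q → ℝ)) := by
  refine PointedCone.isClosed_hull_of_finite <|
    (Set.finite_range fun p : Fin q × Fin q => Pi.single p.1 (1 : ℝ) + Pi.single p.2 1).subset ?_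
  rintro _ ⟨i, j, -, rfl⟩
  exact ⟨(i, j), rfl⟩

section Matching

variable {q : ℕ} {rel : Fin q → Fin q → Prop} [DecidableRel rel] {lam : Fin q → ℝ}

def NoDeficientSet (rel : Fin q → Fin q → Prop) [DecidableRel rel] (lam : Fin q → ℝ) : Prop :=
  ∀ S : Finset (Fin q), S.Nonempty → ∑ i ∈ S, lam i ≤ ∑ i ∈ nbhd rel S, lam i

theorem sum_mul_nonneg_of_noDeficientSet (hlam : ∀ i, 0 ≤ lam i) (H : NoDeficientSet rel lam)
    {y : Fin q → ℝ} (hy : ∀ i j, rel i j → 0 ≤ y i + y j) : 0 ≤ ∑ i, lam i * y i := by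
  have hlevel : ∀ t ∈ Set.Ioi (0 : ℝ), ∑ i with t ≤ -y i, lam i ≤ ∑ i with t ≤ y i, lam i := by
    intro t _
    rcases ({i | t ≤ -y i} : Finset (Fin q)).eq_empty_or_nonempty with hS | hS
    · rw [hS, sum_empty]
      exact sum_nonneg fun i _ => hlam i
    refine (H _ hS).trans (sum_le_sum_of_subset_of_nonneg ?_ fun i _ _ => hlam i)
    intro i hi
    obtain ⟨j, hj, hij⟩ := (mem_filter.1 hi).2
    rw [mem_filter_univ] at hj ⊢
    linarith [hy i j hij]
  have hint := setIntegral_mono_on (integrableOn_sum_filter_le lam _)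
    (integrableOn_sum_filter_le lam _) measurableSet_Ioi hlevel
  rw [← sum_mul_posPart_eq_integral, ← sum_mul_posPart_eq_integral] at hint
  calc 0 ≤ ∑ i, lam i * (y i)⁺ - ∑ i, lam i * (-y i)⁺ := sub_nonneg.2 hint
    _ = ∑ i, lam i * y i := by
      rw [← sum_sub_distrib]
      exact sum_congr rfl fun i _ => by rw [← mul_sub, posPart_neg, posPart_sub_negPart]

theorem mem_coneOfSet_pairTypes_of_noDeficientSet (hlam : ∀ i, 0 ≤ lam i)
    (H : NoDeficientSet rel lam) : lam ∈ coneOfSet (pairTypes rel) := by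
  by_contra hmem
  let C : ProperCone ℝ (Fin q → ℝ) :=
    ⟨PointedCone.hull ℝ (pairTypes rel), isClosed_hull_pairTypes rel⟩
  obtain ⟨f, hf, hflam⟩ := C.hyperplane_separation_point (x₀ := lam) (by
    rwa [coneOfSet_eq_hull] at hmem)
  have hedge : ∀ i j, rel i j → 0 ≤ f (Pi.single i 1) + f (Pi.single j 1) := fun i j hij => by
    simpa only [map_add] using hf _ (PointedCone.subset_hull ⟨i, j, hij, rfl⟩)
  have := sum_mul_nonneg_of_noDeficientSet hlam H hedge
  rw [← apply_eq_sum_mul_apply_single] at this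
  exact (this.trans_lt hflam).false

open Filter Topology in
theorem mem_interior_coneOfSet_pairTypes (hlam : ∀ i, 0 < lam i)
    (h : ∀ S : Finset (Fin q), S.Nonempty →
      ∑ i ∈ S, lam i < ∑ i ∈ nbhd rel S, lam i ∨ nbhd rel S = S) :
    lam ∈ interior (coneOfSet (pairTypes rel)) := by
  have hpos : ∀ i, ∀ᶠ f in 𝓝 lam, 0 ≤ f i := fun i =>
    (continuousAt_const.eventually_lt (continuous_apply i).continuousAt (hlam i)).mono
      fun _ => le_of_lt
  have hdef : ∀ S : Finset (Fin q), ∀ᶠ f in 𝓝 lam,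
      S.Nonempty → ∑ i ∈ S, f i ≤ ∑ i ∈ nbhd rel S, f i := by
    intro S
    rcases S.eq_empty_or_nonempty with rfl | hS
    · exact Eventually.of_forall fun _ hne => absurd hne not_nonempty_empty
    rcases h S hS with hlt | hfix
    · exact (ContinuousAt.eventually_lt (by fun_prop) (by fun_prop) hlt).mono
        fun _ hf _ => hf.le
    · exact Eventually.of_forall fun _ _ => by rw [hfix]
  rw [mem_interior_iff_mem_nhds]
  filter_upwards [eventually_all.2 hpos, eventually_all.2 hdef] with f hf hfdef
  exact mem_coneOfSet_pairTypes_of_noDeficientSet hf hfdef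

open Filter Topology in
theorem notMem_interior_coneOfSet_pairTypes (hsymm : ∀ i j, rel i j → rel j i)
    (hlam : ∀ i, 0 < lam i) {S : Finset (Fin q)}
    (hcrit : ∑ i ∈ nbhd rel S, lam i = ∑ i ∈ S, lam i) (hne : nbhd rel S ≠ S) :
    lam ∉ interior (coneOfSet (pairTypes rel)) := by
  obtain ⟨x, hxS, hxN⟩ : ∃ x ∈ S, x ∉ nbhd rel S := by
    by_contra! hsub
    obtain ⟨z, hzN, hzS⟩ := exists_of_ssubset (ssubset_of_subset_of_ne hsub hne.symm)
    exact (sum_lt_sum_of_subset hsub hzN hzS (hlam z) fun j _ _ => (hlam j).le).ne hcrit.symm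
  let φ : (Fin q → ℝ) →ₗ[ℝ] ℝ := ∑ k ∈ nbhd rel S, LinearMap.proj k - ∑ k ∈ S, LinearMap.proj k
  have hφ : ∀ v, φ v = ∑ k ∈ nbhd rel S, v k - ∑ k ∈ S, v k := fun v => by simp [φ]
  have hφpair : ∀ w ∈ pairTypes rel, 0 ≤ φ w := by
    rintro _ ⟨i, j, hij, rfl⟩
    have hi : i ∈ S → j ∈ nbhd rel S := fun hi => (mem_filter_univ j).2 ⟨i, hi, hsymm i j hij⟩
    have hj : j ∈ S → i ∈ nbhd rel S := fun hj => (mem_filter_univ i).2 ⟨j, hj, hij⟩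
    simp only [hφ, Pi.add_apply, sum_add_distrib, sum_pi_single']
    split_ifs <;> simp_all
  have hφx : ∀ ε : ℝ, φ (lam + ε • Pi.single x 1) = -ε := fun ε => by
    rw [hφ, ← Pi.single_smul, smul_eq_mul, mul_one]
    simp [sum_add_distrib, sum_pi_single', hcrit, hxS, hxN]
  have hpath : Tendsto (fun ε : ℝ => lam + ε • Pi.single x 1) (𝓝[>] 0) (𝓝 lam) :=
    tendsto_nhdsWithin_of_tendsto_nhds <| by
      simpa using ((continuous_id.smul continuous_const).const_add lam).tendsto (0 : ℝ)
  intro hint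
  obtain ⟨ε, hε, hεpos⟩ :=
    ((hpath.eventually (mem_interior_iff_mem_nhds.1 hint)).and self_mem_nhdsWithin).exists
  have := nonneg_of_mem_coneOfSet φ hφpair hε
  rw [hφx] at this
  exact (neg_neg_of_pos hεpos).not_ge this

end Matching

/-- If every nonempty `S` is excessive or self-neighbouring, then `λ` is interior
to `cone(V)`; if there is no deficient set but some critical set, then
`λ ∈ ∂cone(V)`. -/
theorem stmt17 {q : ℕ} (rel : Fin q → Fin q → Prop) [DecidableRel rel]
    (hsymm : ∀ i j, rel i j → rel j i)
    (lam : Fin q → ℝ) (hlam : ∀ i, 0 < lam i) :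
    ((∀ S : Finset (Fin q), S.Nonempty →
        (∑ i ∈ S, lam i < ∑ i ∈ nbhd rel S, lam i ∨ nbhd rel S = S)) →
      lam ∈ interior (coneOfSet (pairTypes rel))) ∧
    (((¬ ∃ S : Finset (Fin q), S.Nonempty ∧ ∑ i ∈ nbhd rel S, lam i < ∑ i ∈ S, lam i) ∧
        (∃ S : Finset (Fin q), S.Nonempty ∧
          ∑ i ∈ nbhd rel S, lam i = ∑ i ∈ S, lam i ∧ nbhd rel S ≠ S)) →
      lam ∈ frontier (coneOfSet (pairTypes rel))) := by
  refine ⟨mem_interior_coneOfSet_pairTypes hlam, ?_⟩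
  rintro ⟨hnodef, S, -, hcrit, hne⟩
  have H : NoDeficientSet rel lam := fun S hS => not_lt.1 fun h => hnodef ⟨S, hS, h⟩
  exact ⟨subset_closure (mem_coneOfSet_pairTypes_of_noDeficientSet (fun i => (hlam i).le) H),
    notMem_interior_coneOfSet_pairTypes hsymm hlam hcrit hne⟩
end
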